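/- arXiv:2402.12535 — 5 statements merged into one kernel-verified Lean document; each statement's English description precedes it below -/
import Mathlib

section
/- For all real u > 1/√2, the function f(u) = Erf(u) - (1 - exp(-u²))/(u√π) satisfies f(u) ≥ 1 - 1/(u√π). -/
/-! The Gaussian tail satisfies the Mills-ratio bound `∫_u^∞ e^{-t²} dt ≤ e^{-u²}/(2u)` for `u > 0`,
since inserting the factor `t / u ≥ 1` under the integral leaves the explicit `∫_u^∞ t e^{-t²} dt`. Hence
`erf u ≥ 1 - e^{-u²}/(u√π)`, and the `e^{-u²}/(u√π)` terms cancel in `f u`. -/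

open Real MeasureTheory Set Filter

noncomputable def erf (u : ℝ) : ℝ := (2 / Real.sqrt Real.pi) * ∫ t in (0:ℝ)..u, Real.exp (-t ^ 2)

noncomputable def f (u : ℝ) : ℝ := erf u - (1 - Real.exp (-u ^ 2)) / (u * Real.sqrt Real.pi)

section GaussianTail

variable {b : ℝ}

lemma integral_Ioi_mul_exp_neg_mul_sq (hb : 0 < b) (u : ℝ) :
    ∫ t in Ioi u, t * exp (-b * t ^ 2) = exp (-b * u ^ 2) / (2 * b) := by
  have hderiv (x : ℝ) : HasDerivAt (fun t => -exp (-b * t ^ 2) / (2 * b))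
      (x * exp (-b * x ^ 2)) x := by
    refine ((((hasDerivAt_pow 2 x).const_mul (-b)).exp.fun_neg).div_const (2 * b)).congr_deriv ?_
    field_simp
    ring
  have hlim : Tendsto (fun t => -exp (-b * t ^ 2) / (2 * b)) atTop (nhds 0) := by
    have hsq : Tendsto (fun t : ℝ => -b * t ^ 2) atTop atBot :=
      (tendsto_pow_atTop two_ne_zero).const_mul_atTop_of_neg (neg_neg_of_pos hb)
    simpa using (tendsto_exp_atBot.comp hsq).neg.div_const (2 * b)
  rw [integral_Ioi_of_hasDerivAt_of_tendsto' (fun x _ => hderiv x)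
    (integrable_mul_exp_neg_mul_sq hb).integrableOn hlim]
  ring

lemma integral_Ioi_exp_neg_mul_sq_le (hb : 0 < b) {u : ℝ} (hu : 0 < u) :
    ∫ t in Ioi u, exp (-b * t ^ 2) ≤ exp (-b * u ^ 2) / (2 * b * u) :=
  calc ∫ t in Ioi u, exp (-b * t ^ 2)
      ≤ ∫ t in Ioi u, t * exp (-b * t ^ 2) / u := by
        refine setIntegral_mono_on (integrable_exp_neg_mul_sq hb).integrableOn
          ((integrable_mul_exp_neg_mul_sq hb).integrableOn.div_const u) measurableSet_Ioi
          fun t ht => ?_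
        rw [le_div_iff₀ hu, mul_comm]
        exact mul_le_mul_of_nonneg_right (le_of_lt ht) (exp_pos _).le
    _ = exp (-b * u ^ 2) / (2 * b * u) := by
        rw [integral_div, integral_Ioi_mul_exp_neg_mul_sq hb, div_div]

end GaussianTail

lemma erf_eq_one_sub_integral_Ioi (u : ℝ) :
    erf u = 1 - 2 / √π * ∫ t in Ioi u, exp (-t ^ 2) := by
  have hint (a : ℝ) : IntegrableOn (fun t => exp (-t ^ 2)) (Ioi a) := by
    simpa using (integrable_exp_neg_mul_sq one_pos).integrableOn
  have hhalf : ∫ t in Ioi (0 : ℝ), exp (-t ^ 2) = √π / 2 := by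
    simpa using integral_gaussian_Ioi 1
  have hπ : √π ≠ 0 := (sqrt_pos.mpr pi_pos).ne'
  rw [erf, ← intervalIntegral.integral_Ioi_sub_Ioi' (hint 0) (hint u), hhalf]
  field_simp

lemma one_sub_exp_div_le_erf {u : ℝ} (hu : 0 < u) :
    1 - exp (-u ^ 2) / (u * √π) ≤ erf u := by
  have htail : ∫ t in Ioi u, exp (-t ^ 2) ≤ exp (-u ^ 2) / (2 * u) := by
    simpa using integral_Ioi_exp_neg_mul_sq_le one_pos hu
  have hπ : 0 < √π := sqrt_pos.mpr pi_pos
  calc 1 - exp (-u ^ 2) / (u * √π) = 1 - 2 / √π * (exp (-u ^ 2) / (2 * u)) := by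
        field_simp
    _ ≤ erf u := by
        rw [erf_eq_one_sub_integral_Ioi]
        gcongr

theorem stmt_0 : ∀ u : ℝ, 1 / Real.sqrt 2 < u → f u ≥ 1 - 1 / (u * Real.sqrt Real.pi) := by
  intro u hu
  have hu0 : 0 < u := lt_trans (by positivity) hu
  have herf := one_sub_exp_div_le_erf hu0
  rw [f, ge_iff_le, sub_div]
  linarith
end

section
/- For all real u with 0 < u ≤ 1/√2, the function f(u) = Erf(u) - (1 - exp(-u²))/(u√π) satisfies f(u) ≥ 2u/(3√π). -/
/-!
Bound the integrand from below by `exp (-t²) ≥ 1 - t²`, so `erf u ≥ (2/√π)(u - u³/3)`, and bound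
the subtracted term using `1 - exp (-u²) ≤ u²`. Together `f u ≥ (u - 2u³/3)/√π`, which is at least
`2u/(3√π)` exactly when `u² ≤ 1/2`.
-/

open Real

lemma sub_pow_three_div_three_le_integral_exp_neg_sq {u : ℝ} (hu : 0 ≤ u) :
    u - u ^ 3 / 3 ≤ ∫ t in (0:ℝ)..u, exp (-t ^ 2) := by
  have h_poly : ∫ t in (0:ℝ)..u, (1 - t ^ 2) = u - u ^ 3 / 3 := by
    rw [intervalIntegral.integral_sub intervalIntegrable_const ((continuous_pow 2).intervalIntegrable 0 u),
      integral_pow]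
    norm_num
  rw [← h_poly]
  refine intervalIntegral.integral_mono_on hu
    ((by fun_prop : Continuous fun t : ℝ => 1 - t ^ 2).intervalIntegrable 0 u)
    ((by fun_prop : Continuous fun t : ℝ => exp (-t ^ 2)).intervalIntegrable 0 u) fun t _ => ?_
  linarith [add_one_le_exp (-t ^ 2)]

lemma erf_ge_of_nonneg {u : ℝ} (hu : 0 ≤ u) : 2 / √π * (u - u ^ 3 / 3) ≤ erf u :=
  mul_le_mul_of_nonneg_left (sub_pow_three_div_three_le_integral_exp_neg_sq hu) (by positivity)

lemma one_sub_exp_neg_sq_div_le {u : ℝ} (hu : 0 < u) :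
    (1 - exp (-u ^ 2)) / (u * √π) ≤ u / √π := by
  have hpi : 0 < √π := sqrt_pos.mpr pi_pos
  rw [div_le_div_iff₀ (by positivity) hpi]
  nlinarith [add_one_le_exp (-u ^ 2)]

lemma cubic_div_sqrt_pi_le_f {u : ℝ} (hu : 0 < u) : (u - 2 * u ^ 3 / 3) / √π ≤ f u := by
  have h_erf := erf_ge_of_nonneg hu.le
  have h_sub := one_sub_exp_neg_sq_div_le hu
  calc (u - 2 * u ^ 3 / 3) / √π = 2 / √π * (u - u ^ 3 / 3) - u / √π := by ring
    _ ≤ f u := by unfold f; linarith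

theorem stmt_2 : ∀ u : ℝ, 0 < u → u ≤ 1 / Real.sqrt 2 → f u ≥ 2 * u / (3 * Real.sqrt Real.pi) := by
  intro u hu hle
  have hu_sq : u ^ 2 ≤ 1 / 2 := by
    calc u ^ 2 ≤ (1 / √2) ^ 2 := pow_le_pow_left₀ hu.le hle 2
      _ = 1 / 2 := by rw [div_pow, one_pow, sq_sqrt zero_le_two]
  have h_cubic : 2 * u / 3 ≤ u - 2 * u ^ 3 / 3 := by nlinarith
  calc 2 * u / (3 * √π) = 2 * u / 3 / √π := by rw [div_div]
    _ ≤ (u - 2 * u ^ 3 / 3) / √π := by gcongr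
    _ ≤ f u := cubic_div_sqrt_pi_le_f hu
end

section
/- For all real u with 0 < u ≤ 1/√2, the function f(u) = Erf(u) - (1 - exp(-u²))/(u√π) satisfies f(u) ≤ u/√π. -/
open Real

/-!
Bound the integral in `erf` from above by integrating `exp (-t²) ≤ 1 - t² + t⁴/2`, and
`(1 - exp (-u²)) / u` from below by `u - u³/2`, from the same Taylor bound. Then
`√π f(u) ≤ 2 (u - u³/3 + u⁵/10) - (u - u³/2) = u - u³/6 + u⁵/5`, which is at most `u`
as long as `u² ≤ 5/6`.
-/

lemma exp_neg_le_one_sub_add_sq_div_two {x : ℝ} (hx : 0 ≤ x) :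
    exp (-x) ≤ 1 - x + x ^ 2 / 2 := by
  have hquad : 1 + x + x ^ 2 / 2 ≤ exp x := quadratic_le_exp_of_nonneg hx
  have hpos : 0 < 1 - x + x ^ 2 / 2 := by nlinarith [sq_nonneg (x - 1)]
  have hone : 1 ≤ (1 - x + x ^ 2 / 2) * exp x := by
    nlinarith [mul_le_mul_of_nonneg_left hquad hpos.le, sq_nonneg (x ^ 2)]
  rw [exp_neg, inv_le_iff_one_le_mul₀ (exp_pos x)]
  linarith

lemma integral_exp_neg_sq_le {u : ℝ} (hu : 0 ≤ u) :
    ∫ t in (0:ℝ)..u, exp (-t ^ 2) ≤ u - u ^ 3 / 3 + u ^ 5 / 10 := by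
  calc ∫ t in (0:ℝ)..u, exp (-t ^ 2)
      ≤ ∫ t in (0:ℝ)..u, (1 - t ^ 2 + t ^ 4 / 2) := by
        refine intervalIntegral.integral_mono_on hu
          ((by fun_prop : Continuous _).intervalIntegrable _ _)
          ((by fun_prop : Continuous _).intervalIntegrable _ _) fun t _ => ?_
        simpa only [← pow_mul] using exp_neg_le_one_sub_add_sq_div_two (sq_nonneg t)
    _ = u - u ^ 3 / 3 + u ^ 5 / 10 := by
        simp only [intervalIntegral.integral_add, intervalIntegral.integral_sub,
          intervalIntegral.integral_div, intervalIntegral.integral_const, integral_pow,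
          intervalIntegrable_const, intervalIntegral.intervalIntegrable_pow,
          IntervalIntegrable.sub, IntervalIntegrable.div_const, smul_eq_mul]
        ring

lemma sub_cube_div_two_le_one_sub_exp_neg_sq_div {u : ℝ} (hu : 0 < u) :
    u - u ^ 3 / 2 ≤ (1 - exp (-u ^ 2)) / u := by
  have hexp := exp_neg_le_one_sub_add_sq_div_two (sq_nonneg u)
  rw [le_div_iff₀ hu]
  nlinarith

lemma f_eq_div_sqrt_pi {u : ℝ} (hu : u ≠ 0) :
    f u = (2 * (∫ t in (0:ℝ)..u, exp (-t ^ 2)) - (1 - exp (-u ^ 2)) / u) / √π := by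
  have : √π ≠ 0 := (sqrt_pos.mpr pi_pos).ne'
  unfold f erf
  field_simp

theorem stmt_3 : ∀ u : ℝ, 0 < u → u ≤ 1 / Real.sqrt 2 → f u ≤ u / Real.sqrt Real.pi := by
  intro u hu hu2
  have husq : u ^ 2 ≤ 1 / 2 := by
    calc u ^ 2 ≤ (1 / √2) ^ 2 := pow_le_pow_left₀ hu.le hu2 2
      _ = 1 / 2 := by rw [div_pow, sq_sqrt zero_le_two, one_pow]
  have hint := integral_exp_neg_sq_le hu.le
  have hquot := sub_cube_div_two_le_one_sub_exp_neg_sq_div hu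
  rw [f_eq_div_sqrt_pi hu.ne']
  have hquintic : u ^ 5 / 5 ≤ u ^ 3 / 6 := by
    nlinarith [mul_le_mul_of_nonneg_left husq (pow_nonneg hu.le 3)]
  gcongr
  linarith
end

section
/- Let p_r(z) denote the E²LSH collision probability p_r(z) = Erf(r/(√2 z)) - √(2/π)·(z/r)·(1 - exp(-r²/(2z²))) for z, r > 0. Then for z < r, 1 - √(2/π)·(z/r) ≤ p_r(z) ≤ 1 - √(1/(2π))·(z/r), and for z ≥ r, (√2/(3√π))·(r/z) ≤ p_r(z) ≤ (1/√(2π))·(r/z). -/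
noncomputable def p (r z : ℝ) : ℝ :=
  erf (r / (Real.sqrt 2 * z)) -
    Real.sqrt (2 / Real.pi) * (z / r) * (1 - Real.exp (-(r ^ 2 / (2 * z ^ 2))))

open MeasureTheory Set Filter Real

lemma continuous_exp_neg_sq : Continuous fun t : ℝ => exp (-t ^ 2) := by fun_prop

lemma integrable_exp_neg_sq : Integrable fun t : ℝ => exp (-t ^ 2) := by
  simpa using integrable_exp_neg_mul_sq one_pos

lemma integrable_mul_exp_neg_sq : Integrable fun t : ℝ => t * exp (-t ^ 2) := by
  simpa using integrable_mul_exp_neg_mul_sq one_pos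

lemma hasDerivAt_neg_exp_neg_sq_div_two (t : ℝ) :
    HasDerivAt (fun t : ℝ => -exp (-t ^ 2) / 2) (t * exp (-t ^ 2)) t := by
  refine ((((hasDerivAt_pow 2 t).fun_neg.exp).fun_neg).div_const 2).congr_deriv ?_
  simp only [Nat.cast_ofNat]
  ring

lemma integral_mul_exp_neg_sq (u : ℝ) :
    ∫ t in (0:ℝ)..u, t * exp (-t ^ 2) = (1 - exp (-u ^ 2)) / 2 := by
  rw [intervalIntegral.integral_eq_sub_of_hasDerivAt
    (fun t _ => hasDerivAt_neg_exp_neg_sq_div_two t)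
    (by apply Continuous.intervalIntegrable; fun_prop)]
  simp only [ne_eq, OfNat.ofNat_ne_zero, not_false_eq_true, zero_pow, neg_zero, exp_zero]
  ring

lemma integral_Ioi_mul_exp_neg_sq (u : ℝ) :
    ∫ t in Ioi u, t * exp (-t ^ 2) = exp (-u ^ 2) / 2 := by
  have hlim : Tendsto (fun t : ℝ => -exp (-t ^ 2) / 2) atTop (nhds 0) := by
    have := (tendsto_exp_atBot.comp (tendsto_neg_atTop_atBot.comp
      (tendsto_pow_atTop two_ne_zero))).neg.div_const 2
    simpa using this
  rw [integral_Ioi_of_hasDerivAt_of_tendsto' (fun t _ => hasDerivAt_neg_exp_neg_sq_div_two t)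
    integrable_mul_exp_neg_sq.integrableOn hlim]
  ring

lemma integral_exp_neg_sq_add_integral_Ioi {u : ℝ} (hu : 0 ≤ u) :
    (∫ t in (0:ℝ)..u, exp (-t ^ 2)) + ∫ t in Ioi u, exp (-t ^ 2) = √π / 2 := by
  rw [intervalIntegral.integral_of_le hu, ← setIntegral_union (Ioc_disjoint_Ioi le_rfl)
    measurableSet_Ioi integrable_exp_neg_sq.integrableOn integrable_exp_neg_sq.integrableOn,
    Ioc_union_Ioi_eq_Ioi hu]
  simpa using integral_gaussian_Ioi 1

lemma integral_Ioi_exp_neg_sq_le {u : ℝ} (hu : 0 < u) :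
    ∫ t in Ioi u, exp (-t ^ 2) ≤ exp (-u ^ 2) / (2 * u) :=
  calc ∫ t in Ioi u, exp (-t ^ 2) ≤ ∫ t in Ioi u, u⁻¹ * (t * exp (-t ^ 2)) := by
        refine setIntegral_mono_on integrable_exp_neg_sq.integrableOn
          (integrable_mul_exp_neg_sq.const_mul u⁻¹).integrableOn ?_ ?_
        · exact measurableSet_Ioi
        · intro t ht
          rw [← mul_assoc, ← div_eq_inv_mul]
          exact le_mul_of_one_le_left (exp_pos _).le ((one_le_div hu).2 (le_of_lt ht))
    _ = exp (-u ^ 2) / (2 * u) := by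
        rw [integral_const_mul, integral_Ioi_mul_exp_neg_sq]; field_simp

lemma mul_exp_le_integral_Ioi_exp_neg_sq {u : ℝ} (hu : 0 ≤ u) :
    u * exp (-(2 * u) ^ 2) ≤ ∫ t in Ioi u, exp (-t ^ 2) :=
  calc u * exp (-(2 * u) ^ 2) = ∫ _ in u..2 * u, exp (-(2 * u) ^ 2) := by
        rw [intervalIntegral.integral_const, smul_eq_mul]; ring
    _ ≤ ∫ t in u..2 * u, exp (-t ^ 2) := by
        refine intervalIntegral.integral_mono_on (by linarith) (by simp)
          (continuous_exp_neg_sq.intervalIntegrable _ _) fun t ht => ?_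
        rw [exp_le_exp, neg_le_neg_iff]
        exact pow_le_pow_left₀ (by linarith [ht.1]) ht.2 2
    _ ≤ ∫ t in Ioi u, exp (-t ^ 2) := by
        rw [intervalIntegral.integral_of_le (by linarith)]
        exact setIntegral_mono_set integrable_exp_neg_sq.integrableOn
          (Eventually.of_forall fun t => (exp_pos _).le) Ioc_subset_Ioi_self.eventuallyLE

noncomputable def tentIntegral (u : ℝ) : ℝ := ∫ t in (0:ℝ)..u, (1 - t / u) * exp (-t ^ 2)

lemma tentIntegral_eq {u : ℝ} (hu : 0 < u) :
    tentIntegral u = (∫ t in (0:ℝ)..u, exp (-t ^ 2)) - (1 - exp (-u ^ 2)) / (2 * u) := by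
  have hsplit : ∀ t : ℝ,
      (1 - t / u) * exp (-t ^ 2) = exp (-t ^ 2) - u⁻¹ * (t * exp (-t ^ 2)) := fun t => by ring
  simp_rw [tentIntegral, hsplit]
  rw [intervalIntegral.integral_sub (continuous_exp_neg_sq.intervalIntegrable _ _)
    (by apply Continuous.intervalIntegrable; fun_prop),
    intervalIntegral.integral_const_mul, integral_mul_exp_neg_sq]
  field_simp

lemma tentIntegral_le {u : ℝ} (hu : 0 < u) : tentIntegral u ≤ u / 2 :=
  calc tentIntegral u ≤ ∫ t in (0:ℝ)..u, (1 - t / u) := by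
        refine intervalIntegral.integral_mono_on hu.le
          (by apply Continuous.intervalIntegrable; fun_prop)
          (by apply Continuous.intervalIntegrable; fun_prop) fun t ht => ?_
        have : 0 ≤ 1 - t / u := sub_nonneg.2 ((div_le_one hu).2 ht.2)
        exact mul_le_of_le_one_right this (exp_le_one_iff.2 (by nlinarith))
    _ = u / 2 := by
        simp only [intervalIntegrable_const, intervalIntegral.intervalIntegrable_id,
          IntervalIntegrable.div_const, intervalIntegral.integral_sub,
          intervalIntegral.integral_const, intervalIntegral.integral_div, integral_id]
        field_simp; ring

lemma div_three_le_tentIntegral {u : ℝ} (hu : 0 < u) (hu2 : u ^ 2 ≤ 2) :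
    u / 3 ≤ tentIntegral u :=
  calc u / 3 ≤ u / 2 - u ^ 3 / 12 := by nlinarith
    _ = ∫ t in (0:ℝ)..u, (1 - t / u) * (1 - t ^ 2) := by
        have hexpand : ∀ t : ℝ, (1 - t / u) * (1 - t ^ 2) = 1 - t / u - t ^ 2 + t ^ 3 / u :=
          fun t => by ring
        simp_rw [hexpand]
        rw [intervalIntegral.integral_add, intervalIntegral.integral_sub,
          intervalIntegral.integral_sub]
        · simp only [intervalIntegral.integral_const, intervalIntegral.integral_div, integral_id,
            integral_pow]
          field_simp; ring
        all_goals apply Continuous.intervalIntegrable; fun_prop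
    _ ≤ tentIntegral u := by
        refine intervalIntegral.integral_mono_on hu.le
          (by apply Continuous.intervalIntegrable; fun_prop)
          (by apply Continuous.intervalIntegrable; fun_prop) fun t ht => ?_
        have : 0 ≤ 1 - t / u := sub_nonneg.2 ((div_le_one hu).2 ht.2)
        exact mul_le_mul_of_nonneg_left (by linarith [add_one_le_exp (-t ^ 2)]) this

lemma sqrt_pi_div_two_sub_le_tentIntegral {u : ℝ} (hu : 0 < u) :
    √π / 2 - 1 / (2 * u) ≤ tentIntegral u := by
  have htail := integral_Ioi_exp_neg_sq_le hu
  have hsum := integral_exp_neg_sq_add_integral_Ioi hu.le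
  rw [tentIntegral_eq hu]
  have : exp (-u ^ 2) / (2 * u) + (1 - exp (-u ^ 2)) / (2 * u) = 1 / (2 * u) := by ring
  linarith

lemma tentIntegral_le_sqrt_pi_div_two_sub {u : ℝ} (hu : 0 < u) (hu2 : 1 ≤ 2 * u ^ 2) :
    tentIntegral u ≤ √π / 2 - 1 / (4 * u) := by
  have htail := mul_exp_le_integral_Ioi_exp_neg_sq hu.le
  have hsum := integral_exp_neg_sq_add_integral_Ioi hu.le
  rw [tentIntegral_eq hu]
  set s := exp (-u ^ 2)
  have hs4 : exp (-(2 * u) ^ 2) = s ^ 4 := by rw [← exp_nat_mul]; ring_nf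
  rw [hs4] at htail
  have hgap : 1 / (4 * u) ≤ u * s ^ 4 + (1 - s) / (2 * u) := by
    have hdiff : u * s ^ 4 + (1 - s) / (2 * u) - 1 / (4 * u)
        = (4 * u ^ 2 * s ^ 4 - 2 * s + 1) / (4 * u) := by
      field_simp; ring
    -- `4u² ≥ 2` and `2s⁴ - 2s + 1 > 0` for every real `s`
    have hnum : 0 ≤ 4 * u ^ 2 * s ^ 4 - 2 * s + 1 := by
      nlinarith [sq_nonneg (s ^ 2 - 2 / 5), sq_nonneg (s - 5 / 8), pow_nonneg (sq_nonneg s) 2]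
    rw [← sub_nonneg, hdiff]
    exact div_nonneg hnum (by positivity)
  linarith

lemma p_eq_tentIntegral {r z : ℝ} (hz : 0 < z) (hr : 0 < r) :
    p r z = 2 / √π * tentIntegral (r / (√2 * z)) := by
  have hu : 0 < r / (√2 * z) := by positivity
  have h2 : √2 ^ 2 = 2 := sq_sqrt zero_le_two
  rw [p, erf, tentIntegral_eq hu, sqrt_div zero_le_two, div_pow, mul_pow, h2]
  field_simp

theorem stmt_9 (r z : ℝ) (hz : 0 < z) (hr : 0 < r) :
    (z < r →
      1 - Real.sqrt (2 / Real.pi) * (z / r) ≤ p r z ∧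
      p r z ≤ 1 - Real.sqrt (1 / (2 * Real.pi)) * (z / r)) ∧
    (r ≤ z →
      Real.sqrt 2 / (3 * Real.sqrt Real.pi) * (r / z) ≤ p r z ∧
      p r z ≤ 1 / Real.sqrt (2 * Real.pi) * (r / z)) := by
  rw [p_eq_tentIntegral hz hr]
  set u := r / (√2 * z)
  have hu : 0 < u := by positivity
  have hrz : r / z = √2 * u := by simp only [u]; field_simp
  have hzr : z / r = 1 / (√2 * u) := by rw [← hrz, one_div_div]
  have h2 : √2 ^ 2 = 2 := sq_sqrt zero_le_two
  have hsq : (r / z) ^ 2 = 2 * u ^ 2 := by rw [hrz, mul_pow, h2]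
  have hsqrt : √(2 * π) = √2 * √π := sqrt_mul zero_le_two π
  have hscale : ∀ a b : ℝ, a ≤ b → 2 / √π * a ≤ 2 / √π * b :=
    fun a b hab => mul_le_mul_of_nonneg_left hab (by positivity)
  refine ⟨fun hlt => ⟨?_, ?_⟩, fun hle => ⟨?_, ?_⟩⟩
  · convert hscale _ _ (sqrt_pi_div_two_sub_le_tentIntegral hu) using 1
    rw [hzr, sqrt_div zero_le_two]; field_simp
  · have : 1 ≤ 2 * u ^ 2 := by nlinarith [(one_lt_div hz).2 hlt]
    convert hscale _ _ (tentIntegral_le_sqrt_pi_div_two_sub hu this) using 1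
    rw [hzr, one_div, sqrt_inv, hsqrt]; field_simp; rw [h2]; ring
  · have : u ^ 2 ≤ 2 := by nlinarith [(div_le_one hz).2 hle, div_pos hr hz]
    convert hscale _ _ (div_three_le_tentIntegral hu this) using 1
    rw [hrz]; field_simp; exact h2
  · convert hscale _ _ (tentIntegral_le hu) using 1
    rw [hrz, hsqrt]; field_simp
end

section
/- Define f(u) = Erf(u) − (1 − exp(−u²))/(u√π) for u > 0. Then f is strictly increasing on (0, ∞). -/
/-! The derivative of `f` at `u ≠ 0` simplifies to `(1 - exp (-u²)) / (√π u²)`, which is positive. -/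

open Real

lemma hasDerivAt_erf (u : ℝ) : HasDerivAt erf (2 / √π * exp (-u ^ 2)) u :=
  ((by fun_prop : Continuous fun t : ℝ => exp (-t ^ 2)).integral_hasStrictDerivAt 0 u)
    |>.hasDerivAt.const_mul _

lemma hasDerivAt_one_sub_exp_neg_sq (u : ℝ) :
    HasDerivAt (fun u : ℝ => 1 - exp (-u ^ 2)) (2 * u * exp (-u ^ 2)) u :=
  ((hasDerivAt_pow 2 u).fun_neg.exp.const_sub 1).congr_deriv (by push_cast; ring)

lemma hasDerivAt_f {u : ℝ} (hu : u ≠ 0) :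
    HasDerivAt f ((1 - exp (-u ^ 2)) / (√π * u ^ 2)) u := by
  have hπ : √π ≠ 0 := (sqrt_pos.mpr pi_pos).ne'
  refine ((hasDerivAt_erf u).sub ((hasDerivAt_one_sub_exp_neg_sq u).div
    (hasDerivAt_mul_const √π) (mul_ne_zero hu hπ))).congr_deriv ?_
  field_simp
  ring

lemma one_sub_exp_neg_sq_pos {u : ℝ} (hu : u ≠ 0) : 0 < 1 - exp (-u ^ 2) := by
  have : exp (-u ^ 2) < 1 := exp_lt_one_iff.mpr (neg_neg_iff_pos.mpr (pow_two_pos_of_ne_zero hu))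
  linarith

theorem stmt_19 : StrictMonoOn f (Set.Ioi (0:ℝ)) := by
  apply strictMonoOn_of_deriv_pos (convex_Ioi 0)
  · exact fun u hu => (hasDerivAt_f (ne_of_gt hu)).continuousAt.continuousWithinAt
  · rw [interior_Ioi]
    intro u (hu : 0 < u)
    rw [(hasDerivAt_f (ne_of_gt hu)).deriv]
    have := one_sub_exp_neg_sq_pos (ne_of_gt hu)
    have : 0 < √π := sqrt_pos.mpr pi_pos
    positivity
end
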